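/- Let ρ be a 2-representation of (μ : 𝔤 → 𝔥, L) on φ : W → V, and suppose linear maps λ₀ : 𝔥 → V and λ₁ : 𝔤 → W relate two cocycle triples by: φ̃₂ − φ̃₁ = λ₀∘μ − φ∘λ₁ and (α₂ − α₁)(y;x) = ρ₀¹(y)λ₁(x) − λ₁(L_y x) − ρ₁(x)λ₀(y). Then the induced 2-cocycles ω₁ᵏ(x₀,x₁) := ρ₁(x₁)φ̃ₖ(x₀) + αₖ(μ(x₀);x₁) on 𝔤 with values in the representation ρ₀¹∘μ are cohomologous: (ω₁² − ω₁¹)(x₀,x₁) = ρ₀¹(μ(x₀))λ₁(x₁) − ρ₁(x₁)φ(λ₁(x₀)) − λ₁([x₀,x₁]), which equals the Chevalley–Eilenberg coboundary δλ₁(x₀,x₁) for the representation ρ₀¹∘μ since ρ₁(x)φ = ρ₀¹(μ(x)). -/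

import Mathlib

/-! The λ₀-terms cancel: φ̃₂ − φ̃₁ contributes ρ₁(x₁)λ₀(μx₀) and α₂ − α₁ contributes
−ρ₁(x₁)λ₀(μx₀). What is left is δλ₁ once the Peiffer identity turns L_{μx₀}x₁ into
[x₀,x₁] and ρ₁(x₁)φ = ρ₀¹(μx₁) is used. -/

attribute [local instance] LieRing.ofAssociativeRing

/-- The twisted cocycle ω₁(x₀,x₁) := ρ₁(x₁)φ̃(x₀) + α(μ(x₀); x₁). -/
def omegaOne
    (K : Type*) [Field K]
    (g h W V : Type*) [LieRing g] [LieAlgebra K g] [LieRing h] [LieAlgebra K h]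
    [AddCommGroup W] [Module K W] [AddCommGroup V] [Module K V]
    (μ : g →ₗ⁅K⁆ h) (ρ1 : g →ₗ[K] V →ₗ[K] W)
    (α : h →ₗ[K] g →ₗ[K] W) (φt : g →ₗ[K] V) (x₀ x₁ : g) : W :=
  ρ1 x₁ (φt x₀) + α (μ x₀) x₁

theorem omegaOne_sub_omegaOne {K : Type*} [Field K]
    {g h W V : Type*} [LieRing g] [LieAlgebra K g] [LieRing h] [LieAlgebra K h]
    [AddCommGroup W] [Module K W] [AddCommGroup V] [Module K V]
    (μ : g →ₗ⁅K⁆ h) (ρ1 : g →ₗ[K] V →ₗ[K] W)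
    (α₁ α₂ : h →ₗ[K] g →ₗ[K] W) (φt₁ φt₂ : g →ₗ[K] V) (x₀ x₁ : g) :
    omegaOne K g h W V μ ρ1 α₂ φt₂ x₀ x₁ - omegaOne K g h W V μ ρ1 α₁ φt₁ x₀ x₁ =
      ρ1 x₁ (φt₂ x₀ - φt₁ x₀) + (α₂ (μ x₀) x₁ - α₁ (μ x₀) x₁) := by
  rw [omegaOne, omegaOne, map_sub]
  abel

theorem omegaOne_cohomologous_general
    (K : Type*) [Field K]
    (g h W V : Type*) [LieRing g] [LieAlgebra K g] [LieRing h] [LieAlgebra K h]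
    [AddCommGroup W] [Module K W] [AddCommGroup V] [Module K V]
    (φ : W →ₗ[K] V)
    (μ : g →ₗ⁅K⁆ h) (L : h →ₗ⁅K⁆ Module.End K g)
    (hpeiffer : ∀ (x₀ x₁ : g), L (μ x₀) x₁ = ⁅x₀, x₁⁆)
    (ρ01 : h →ₗ⁅K⁆ Module.End K W)
    (ρ1 : g →ₗ[K] V →ₗ[K] W)
    (h01μ : ∀ x : g, (ρ01 (μ x) : W →ₗ[K] W) = ρ1 x ∘ₗ φ)
    (α₁ α₂ : h →ₗ[K] g →ₗ[K] W) (φt₁ φt₂ : g →ₗ[K] V)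
    (l₀ : h →ₗ[K] V) (l₁ : g →ₗ[K] W)
    (hφt : ∀ x : g, φt₂ x - φt₁ x = l₀ (μ x) - φ (l₁ x))
    (hα : ∀ (y : h) (x : g),
      α₂ y x - α₁ y x = ρ01 y (l₁ x) - l₁ (L y x) - ρ1 x (l₀ y)) :
    ∀ x₀ x₁ : g,
      omegaOne K g h W V μ ρ1 α₂ φt₂ x₀ x₁ -
        omegaOne K g h W V μ ρ1 α₁ φt₁ x₀ x₁ =
        ρ01 (μ x₀) (l₁ x₁) - ρ1 x₁ (φ (l₁ x₀)) - l₁ ⁅x₀, x₁⁆ ∧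
      omegaOne K g h W V μ ρ1 α₂ φt₂ x₀ x₁ -
        omegaOne K g h W V μ ρ1 α₁ φt₁ x₀ x₁ =
        ρ01 (μ x₀) (l₁ x₁) - ρ01 (μ x₁) (l₁ x₀) - l₁ ⁅x₀, x₁⁆ := by
  intro x₀ x₁
  have hdiff : omegaOne K g h W V μ ρ1 α₂ φt₂ x₀ x₁ - omegaOne K g h W V μ ρ1 α₁ φt₁ x₀ x₁ =
      ρ01 (μ x₀) (l₁ x₁) - ρ1 x₁ (φ (l₁ x₀)) - l₁ ⁅x₀, x₁⁆ := by
    rw [omegaOne_sub_omegaOne, hφt, hα, hpeiffer, map_sub]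
    abel
  have hequivariant : ρ1 x₁ (φ (l₁ x₀)) = ρ01 (μ x₁) (l₁ x₀) := by
    rw [← LinearMap.comp_apply, ← h01μ]
  exact ⟨hdiff, hequivariant ▸ hdiff⟩

/-- If two cocycle triples are related by l₀, l₁ as in the theorem on
2-coboundaries, then the induced cocycles ω₁ᵏ are cohomologous: their
difference is the Chevalley–Eilenberg coboundary δl₁ for ρ₀¹∘μ. -/
theorem omegaOne_cohomologous
    (K : Type*) [Field K]
    (g h W V : Type*) [LieRing g] [LieAlgebra K g] [LieRing h] [LieAlgebra K h]
    [AddCommGroup W] [Module K W] [AddCommGroup V] [Module K V]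
    (φ : W →ₗ[K] V)
    (μ : g →ₗ⁅K⁆ h) (L : h →ₗ⁅K⁆ Module.End K g)
    (hder : ∀ (y : h) (x₁ x₂ : g), L y ⁅x₁, x₂⁆ = ⁅L y x₁, x₂⁆ + ⁅x₁, L y x₂⁆)
    (hequiv : ∀ (y : h) (x : g), μ (L y x) = ⁅y, μ x⁆)
    (hpeiffer : ∀ (x₀ x₁ : g), L (μ x₀) x₁ = ⁅x₀, x₁⁆)
    (ρ01 : h →ₗ⁅K⁆ Module.End K W) (ρ00 : h →ₗ⁅K⁆ Module.End K V)
    (ρ1 : g →ₗ[K] V →ₗ[K] W)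
    (hcompat : ∀ y : h, φ ∘ₗ ρ01 y = ρ00 y ∘ₗ φ)
    (h00μ : ∀ x : g, (ρ00 (μ x) : V →ₗ[K] V) = φ ∘ₗ ρ1 x)
    (h01μ : ∀ x : g, (ρ01 (μ x) : W →ₗ[K] W) = ρ1 x ∘ₗ φ)
    (hact : ∀ (y : h) (x : g),
      ρ1 (L y x) = ρ01 y ∘ₗ ρ1 x - ρ1 x ∘ₗ ρ00 y)
    (α₁ α₂ : h →ₗ[K] g →ₗ[K] W) (φt₁ φt₂ : g →ₗ[K] V)
    (l₀ : h →ₗ[K] V) (l₁ : g →ₗ[K] W)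
    (hφt : ∀ x : g, φt₂ x - φt₁ x = l₀ (μ x) - φ (l₁ x))
    (hα : ∀ (y : h) (x : g),
      α₂ y x - α₁ y x = ρ01 y (l₁ x) - l₁ (L y x) - ρ1 x (l₀ y)) :
    ∀ x₀ x₁ : g,
      omegaOne K g h W V μ ρ1 α₂ φt₂ x₀ x₁ -
        omegaOne K g h W V μ ρ1 α₁ φt₁ x₀ x₁ =
        ρ01 (μ x₀) (l₁ x₁) - ρ1 x₁ (φ (l₁ x₀)) - l₁ ⁅x₀, x₁⁆ ∧
      omegaOne K g h W V μ ρ1 α₂ φt₂ x₀ x₁ -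
        omegaOne K g h W V μ ρ1 α₁ φt₁ x₀ x₁ =
        ρ01 (μ x₀) (l₁ x₁) - ρ01 (μ x₁) (l₁ x₀) - l₁ ⁅x₀, x₁⁆ :=
  omegaOne_cohomologous_general K g h W V φ μ L hpeiffer ρ01 ρ1 h01μ α₁ α₂ φt₁ φt₂ l₀ l₁ hφt hα
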